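/- arXiv:2203.01297 — 2 statements merged into one kernel-verified Lean document; each statement's English description precedes it below -/
import Mathlib

section
/- Let (t_i)_{i∈I} be nonnegative reals indexed by a finite set I, let I₀ ⊆ I consist of d elements with the largest values t_i, let t₀ = min over I₀ of t_i, and let (e_i) be nonnegative reals with t_i ≤ e_i²/4 for all i and ∑_{i∈I} e_i ≤ 2d². If ∑_{i∈I₀} t_i < (1/24)·d^{3−4ε} and ∑_{i∈I} t_i ≥ (1/4)·d^{3−2ε} with ε ≥ 0 and d ≥ 1, then we reach a contradiction; hence ∑_{i∈I₀} t_i ≥ (1/24)·d^{3−4ε}. -/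
/-- Core averaging argument: if I₀ consists of the d indices with the largest
values t_i, t_i ≤ e_i²/4, ∑ e_i ≤ 2d², and ∑ t_i ≥ (1/4)·d^(3-2ε), then
∑_{i∈I₀} t_i ≥ (1/24)·d^(3-4ε). -/
theorem stmt6 {ι : Type*} [DecidableEq ι] (I : Finset ι) (I₀ : Finset ι) (t e : ι → ℝ)
    (d : ℕ) (ε : ℝ) (hε : 0 ≤ ε) (hd : 1 ≤ d) (hId : d ≤ I.card)
    (hsub : I₀ ⊆ I) (hcard : I₀.card = d)
    (hmax : ∀ i ∈ I₀, ∀ j ∈ I \ I₀, t j ≤ t i)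
    (ht0 : ∀ i ∈ I, 0 ≤ t i) (he0 : ∀ i ∈ I, 0 ≤ e i)
    (hte : ∀ i ∈ I, t i ≤ (e i) ^ 2 / 4)
    (hesum : ∑ i ∈ I, e i ≤ 2 * (d : ℝ) ^ 2)
    (htsum : (1/4) * (d : ℝ) ^ ((3 : ℝ) - 2 * ε) ≤ ∑ i ∈ I, t i) :
    (1/24) * (d : ℝ) ^ ((3 : ℝ) - 4 * ε) ≤ ∑ i ∈ I₀, t i := by
  by_contra hcon
  push_neg at hcon
  set D := (d : ℝ) with hDdef
  have hD1 : (1 : ℝ) ≤ D := by show (1:ℝ) ≤ (d:ℝ); exact_mod_cast hd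
  have hD0 : (0 : ℝ) < D := lt_of_lt_of_le one_pos hD1
  have hI₀ne : I₀.Nonempty := Finset.card_pos.mp (by omega)
  obtain ⟨i₀, hi₀, hmin⟩ := Finset.exists_min_image I₀ t hI₀ne
  have ht₀0 : 0 ≤ t i₀ := ht0 i₀ (hsub hi₀)
  -- D * t i₀ ≤ ∑_{I₀} t
  have h1 : D * t i₀ ≤ ∑ i ∈ I₀, t i := by
    calc D * t i₀ = ∑ _i ∈ I₀, t i₀ := by
          rw [Finset.sum_const, hcard, nsmul_eq_mul]
      _ ≤ ∑ i ∈ I₀, t i := Finset.sum_le_sum fun j hj => hmin j hj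
  have hexp : D ^ ((3:ℝ) - 4*ε) = D * D ^ ((2:ℝ) - 4*ε) := by
    rw [show (3:ℝ) - 4*ε = 1 + (2 - 4*ε) by ring, Real.rpow_add hD0, Real.rpow_one]
  have ht₀ : t i₀ < (1/24) * D ^ ((2:ℝ) - 4*ε) := by
    have h2 : D * t i₀ < D * ((1/24) * D ^ ((2:ℝ) - 4*ε)) := by
      rw [show D * ((1/24) * D ^ ((2:ℝ) - 4*ε)) = (1/24) * (D * D ^ ((2:ℝ) - 4*ε)) by ring,
        ← hexp]
      exact lt_of_le_of_lt h1 hcon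
    exact (mul_lt_mul_iff_right₀ hD0).mp h2
  -- bound on tail terms
  have hcomp : ∀ j ∈ I \ I₀, t j ≤ Real.sqrt (t i₀) * (e j / 2) := by
    intro j hj
    have hjI : j ∈ I := (Finset.mem_sdiff.mp hj).1
    have hle : t j ≤ t i₀ := hmax i₀ hi₀ j hj
    have he0j : 0 ≤ e j / 2 := by linarith [he0 j hjI]
    have h2 : Real.sqrt (t j) ≤ e j / 2 := by
      rw [show e j / 2 = Real.sqrt ((e j / 2)^2) from (Real.sqrt_sq he0j).symm]
      apply Real.sqrt_le_sqrt
      nlinarith [hte j hjI]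
    calc t j = Real.sqrt (t j) * Real.sqrt (t j) :=
          (Real.mul_self_sqrt (ht0 j hjI)).symm
      _ ≤ Real.sqrt (t i₀) * (e j / 2) :=
          mul_le_mul (Real.sqrt_le_sqrt hle) h2 (Real.sqrt_nonneg _) (Real.sqrt_nonneg _)
  have hsd0 : 0 ≤ Real.sqrt (t i₀) := Real.sqrt_nonneg _
  have hsum2 : ∑ j ∈ I \ I₀, t j ≤ Real.sqrt (t i₀) * D ^ 2 := by
    calc ∑ j ∈ I \ I₀, t j ≤ ∑ j ∈ I \ I₀, Real.sqrt (t i₀) * (e j / 2) :=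
          Finset.sum_le_sum hcomp
      _ = Real.sqrt (t i₀) / 2 * ∑ j ∈ I \ I₀, e j := by
          rw [Finset.mul_sum]; congr 1; ext j; ring
      _ ≤ Real.sqrt (t i₀) / 2 * ∑ j ∈ I, e j := by
          apply mul_le_mul_of_nonneg_left _ (by positivity)
          exact Finset.sum_le_sum_of_subset_of_nonneg Finset.sdiff_subset
            fun j hj _ => he0 j hj
      _ ≤ Real.sqrt (t i₀) / 2 * (2 * D ^ 2) :=
          mul_le_mul_of_nonneg_left hesum (by positivity)
      _ = Real.sqrt (t i₀) * D ^ 2 := by ring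
  -- bound on sqrt
  have hs : Real.sqrt (t i₀) ≤ Real.sqrt (1/24) * D ^ ((1:ℝ) - 2*ε) := by
    have h := Real.sqrt_le_sqrt ht₀.le
    rw [Real.sqrt_mul (by norm_num : (0:ℝ) ≤ 1/24)] at h
    have h2 : Real.sqrt (D ^ ((2:ℝ) - 4*ε)) = D ^ ((1:ℝ) - 2*ε) := by
      rw [Real.sqrt_eq_rpow, ← Real.rpow_mul hD0.le,
        show ((2:ℝ) - 4*ε) * (1/2) = 1 - 2*ε by ring]
    rwa [h2] at h
  -- combine
  have hexp2 : D ^ ((1:ℝ) - 2*ε) * D ^ 2 = D ^ ((3:ℝ) - 2*ε) := by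
    rw [show (D:ℝ) ^ 2 = D ^ (2:ℝ) by rw [← Real.rpow_natCast D 2]; norm_num,
      ← Real.rpow_add hD0]
    congr 1; ring
  have htail : ∑ j ∈ I \ I₀, t j ≤ Real.sqrt (1/24) * D ^ ((3:ℝ) - 2*ε) := by
    calc ∑ j ∈ I \ I₀, t j ≤ Real.sqrt (t i₀) * D ^ 2 := hsum2
      _ ≤ Real.sqrt (1/24) * D ^ ((1:ℝ) - 2*ε) * D ^ 2 :=
          mul_le_mul_of_nonneg_right hs (by positivity)
      _ = Real.sqrt (1/24) * D ^ ((3:ℝ) - 2*ε) := by rw [mul_assoc, hexp2]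
  have hhead : ∑ i ∈ I₀, t i < (1/24) * D ^ ((3:ℝ) - 2*ε) := by
    have : D ^ ((3:ℝ) - 4*ε) ≤ D ^ ((3:ℝ) - 2*ε) :=
      Real.rpow_le_rpow_of_exponent_le hD1 (by linarith)
    calc ∑ i ∈ I₀, t i < (1/24) * D ^ ((3:ℝ) - 4*ε) := hcon
      _ ≤ (1/24) * D ^ ((3:ℝ) - 2*ε) := by linarith
  have hsplit : ∑ j ∈ I \ I₀, t j + ∑ i ∈ I₀, t i = ∑ i ∈ I, t i :=
    Finset.sum_sdiff hsub
  -- numeric fact: sqrt(1/24) < 5/24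
  have hsq : Real.sqrt (1/24) < 5/24 := by
    rw [Real.sqrt_lt' (by norm_num : (0:ℝ) < 5/24)]
    norm_num
  have hpos : 0 < D ^ ((3:ℝ) - 2*ε) := Real.rpow_pos_of_pos hD0 _
  nlinarith [htail, hhead, hsplit, htsum, hpos, hsq]
end

section
/- Let d ≥ 2 and 0 ≤ ε < 1/2, and let T be a set of triangles over a graph of maximum degree at most d such that every bad vertex touches between d^{2−ε/2} and d² triangles. Then there exists a coloring of the bad triangles with ⌈d^{ε/2}/3⌉ colors such that for every color c and every bad vertex v, at most 6·d^{2−ε/2} bad triangles of color c touch v. -/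
/-!
Each vertex lies in at most `C(d, 2) ≤ d² / 2` triangles, since a triangle through `v` is `v`
together with two of its neighbours. Colour the triangles greedily with `N = ⌈d^(ε/2) / 3⌉`
colours and cap `B = ⌊6 d^(2-ε/2)⌋ > 5 d^(2-ε/2)`: at a vertex at most `(d² / 2) / B` colours can
already be full, so the three vertices of a triangle block fewer than `3 d² / (2B) < d^(ε/2) / 3`
colours and a free one always remains, so the Local Lemma is not needed.
-/

open Finset

namespace Finset

variable {α ι : Type*} [DecidableEq ι]

theorem card_filter_le_card_fiber_mul_le_card [Fintype ι] (S : Finset α) (f : α → ι) (B : ℕ) :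
    #{c | B ≤ #{s ∈ S | f s = c}} * B ≤ #S := by
  set F : Finset ι := {c | B ≤ #{s ∈ S | f s = c}}
  calc #F * B ≤ ∑ c ∈ F, #{s ∈ S | f s = c} :=
        card_nsmul_le_sum _ _ _ fun c hc => (mem_filter.1 hc).2
    _ ≤ ∑ c, #{s ∈ S | f s = c} := sum_le_sum_of_subset (subset_univ F)
    _ = #S := (card_eq_sum_card_fiberwise fun _ _ => mem_univ _).symm

variable {V : Type*} [DecidableEq V]

theorem exists_update_card_filter_le {S : Finset (Finset V)} {t : Finset V} (ht : t ∉ S)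
    {B : ℕ} {χ : Finset V → ι} (hχ : ∀ v c, #{s ∈ S | v ∈ s ∧ χ s = c} ≤ B)
    {c : ι} (hc : ∀ v ∈ t, #{s ∈ S | v ∈ s ∧ χ s = c} < B) :
    ∀ v c', #{s ∈ insert t S | v ∈ s ∧ Function.update χ t c s = c'} ≤ B := by
  intro v c'
  have hS : {s ∈ S | v ∈ s ∧ Function.update χ t c s = c'} = {s ∈ S | v ∈ s ∧ χ s = c'} :=
    filter_congr fun s hs => by rw [Function.update_of_ne (ne_of_mem_of_not_mem hs ht)]
  rw [filter_insert, Function.update_self]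
  split_ifs with h
  · obtain ⟨hvt, rfl⟩ := h
    calc #(insert t _) ≤ #{s ∈ S | v ∈ s ∧ χ s = c} + 1 := hS ▸ card_insert_le _ _
      _ ≤ B := hc v hvt
  · exact hS ▸ hχ v c'

theorem exists_coloring_card_filter_le [Fintype ι] (T : Finset (Finset V)) {k m B : ℕ}
    (hk : ∀ t ∈ T, #t ≤ k) (hm : ∀ v, #{t ∈ T | v ∈ t} ≤ m)
    (hkm : k * m < Fintype.card ι * B) :
    ∃ χ : Finset V → ι, ∀ v c, #{t ∈ T | v ∈ t ∧ χ t = c} ≤ B := by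
  induction T using Finset.induction_on with
  | empty =>
    have : Nonempty ι := Fintype.card_pos_iff.1 (Nat.pos_of_ne_zero fun h => by simp [h] at hkm)
    exact ⟨fun _ => Classical.arbitrary ι, by simp⟩
  | @insert t S ht ih =>
    obtain ⟨χ, hχ⟩ := ih (fun s hs => hk s (mem_insert_of_mem hs)) fun v =>
      (card_le_card (filter_subset_filter _ (subset_insert t S))).trans (hm v)
    set F : V → Finset ι := fun v => {c | B ≤ #{s ∈ {s ∈ S | v ∈ s} | χ s = c}}
    have hF : ∀ v, #(F v) * B ≤ m := fun v =>
      (card_filter_le_card_fiber_mul_le_card _ χ B).trans <|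
        (card_le_card (filter_subset_filter _ (subset_insert t S))).trans (hm v)
    have hblocked : #(t.biUnion F) < Fintype.card ι := by
      refine Nat.lt_of_mul_lt_mul_right (a := B) (lt_of_le_of_lt ?_ hkm)
      calc #(t.biUnion F) * B ≤ (∑ v ∈ t, #(F v)) * B := Nat.mul_le_mul_right _ card_biUnion_le
        _ = ∑ v ∈ t, #(F v) * B := sum_mul ..
        _ ≤ ∑ _v ∈ t, m := sum_le_sum fun v _ => hF v
        _ = #t * m := by rw [sum_const, smul_eq_mul]
        _ ≤ k * m := Nat.mul_le_mul_right _ (hk t (mem_insert_self t S))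
    obtain ⟨c, hc⟩ : ∃ c, c ∉ t.biUnion F := by
      by_contra! h
      exact hblocked.ne (by rw [eq_univ_of_forall h, card_univ])
    refine ⟨Function.update χ t c, exists_update_card_filter_le ht hχ fun v hv => ?_⟩
    have : c ∉ F v := fun h => hc (mem_biUnion.2 ⟨v, hv, h⟩)
    simpa [F, filter_filter] using this

end Finset

namespace SimpleGraph

variable {V : Type*} [Fintype V] [DecidableEq V] (G : SimpleGraph V) [DecidableRel G.Adj]

theorem card_filter_mem_le_choose_degree (T : Finset (Finset V)) (hT : ∀ t ∈ T, G.IsNClique 3 t)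
    (v : V) : #{t ∈ T | v ∈ t} ≤ (G.degree v).choose 2 := by
  rw [← card_neighborFinset_eq_degree, ← card_powersetCard]
  refine card_le_card_of_injOn (fun t => t.erase v) (fun t ht => ?_) fun t₁ ht₁ t₂ ht₂ h => ?_
  · obtain ⟨htT, hvt⟩ := mem_filter.1 ht
    refine mem_powersetCard.2 ⟨fun u hu => ?_, ?_⟩
    · rw [mem_erase] at hu
      exact (mem_neighborFinset _ _ _).2 <| (hT t htT).isClique hvt hu.2 hu.1.symm
    · rw [card_erase_of_mem hvt, (hT t htT).card_eq]
  · rw [← insert_erase (mem_filter.1 ht₁).2, ← insert_erase (mem_filter.1 ht₂).2]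
    exact congrArg (insert v) h

end SimpleGraph

theorem three_mul_choose_two_lt_ceil_mul_floor {d : ℕ} (hd : 1 ≤ d) {a b : ℝ} (ha : 0 ≤ a)
    (hab : a + b = 2) : 3 * d.choose 2 < ⌈(d : ℝ) ^ b / 3⌉₊ * ⌊6 * (d : ℝ) ^ a⌋₊ := by
  have hD : (1 : ℝ) ≤ d := by exact_mod_cast hd
  have hDa : 1 ≤ (d : ℝ) ^ a := Real.one_le_rpow hD ha
  have hDb : 0 < (d : ℝ) ^ b := by positivity
  have hDab : (d : ℝ) ^ a * (d : ℝ) ^ b = (d : ℝ) ^ 2 := by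
    rw [← Real.rpow_add (by positivity), hab, Real.rpow_two]
  have hchoose : (d.choose 2 : ℝ) ≤ (d : ℝ) ^ 2 / 2 := by
    simpa using Nat.choose_le_pow_div (α := ℝ) 2 d
  have hN : (d : ℝ) ^ b / 3 ≤ ⌈(d : ℝ) ^ b / 3⌉₊ := Nat.le_ceil _
  have hB : 5 * (d : ℝ) ^ a < ⌊6 * (d : ℝ) ^ a⌋₊ := by
    linarith [Nat.lt_floor_add_one (6 * (d : ℝ) ^ a)]
  have : (3 * d.choose 2 : ℝ) < ⌈(d : ℝ) ^ b / 3⌉₊ * ⌊6 * (d : ℝ) ^ a⌋₊ :=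
    calc (3 * d.choose 2 : ℝ) ≤ 3 / 2 * (d : ℝ) ^ 2 := by linarith
      _ < (d : ℝ) ^ b / 3 * (5 * (d : ℝ) ^ a) := by nlinarith
      _ ≤ _ := mul_le_mul hN hB.le (by positivity) (by positivity)
  exact_mod_cast this

theorem stmt11_general {V : Type*} [Fintype V] [DecidableEq V]
    (G : SimpleGraph V) [DecidableRel G.Adj]
    (d : ℕ) (ε : ℝ) (hd : 2 ≤ d) (hε : ε < 1/2)
    (hdeg : ∀ v, G.degree v ≤ d)
    (T : Finset (Finset V)) (hT3 : ∀ t ∈ T, t.card = 3)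
    (hTadj : ∀ t ∈ T, ∀ u ∈ t, ∀ v ∈ t, u ≠ v → G.Adj u v)
    (bad : V → Prop) [DecidablePred bad] :
    ∃ χ : Finset V → Fin ⌈(d : ℝ) ^ (ε/2) / 3⌉₊,
      ∀ c, ∀ v, bad v →
        ((T.filter (fun t => v ∈ t ∧ (∃ u ∈ t, bad u) ∧ χ t = c)).card : ℝ)
          ≤ 6 * (d : ℝ) ^ ((2:ℝ) - ε/2) := by
  have hclique : ∀ t ∈ T, G.IsNClique 3 t := fun t ht =>
    ⟨fun u hu v hv huv => hTadj t ht u hu v hv huv, hT3 t ht⟩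
  have hcount : ∀ v, #{t ∈ T | v ∈ t} ≤ d.choose 2 := fun v =>
    (G.card_filter_mem_le_choose_degree T hclique v).trans (Nat.choose_le_choose 2 (hdeg v))
  obtain ⟨χ, hχ⟩ := exists_coloring_card_filter_le (ι := Fin ⌈(d : ℝ) ^ (ε/2) / 3⌉₊)
    (B := ⌊6 * (d : ℝ) ^ ((2:ℝ) - ε/2)⌋₊) T (fun t ht => (hT3 t ht).le) hcount <| by
      simpa using three_mul_choose_two_lt_ceil_mul_floor (d := d) (a := 2 - ε / 2)
        (by omega) (by linarith) (sub_add_cancel 2 (ε / 2))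
  refine ⟨χ, fun c v _ => ?_⟩
  calc ((T.filter (fun t => v ∈ t ∧ (∃ u ∈ t, bad u) ∧ χ t = c)).card : ℝ)
      ≤ #{t ∈ T | v ∈ t ∧ χ t = c} := by
        exact_mod_cast card_le_card (monotone_filter_right _ fun _ _ h => And.imp_right And.right h)
    _ ≤ ⌊6 * (d : ℝ) ^ ((2:ℝ) - ε/2)⌋₊ := by exact_mod_cast hχ v c
    _ ≤ 6 * (d : ℝ) ^ ((2:ℝ) - ε/2) := Nat.floor_le (by positivity)

/-- Triangle-coloring lemma: with d ≥ 2 and 0 ≤ ε < 1/2, for a set T of triangles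
of a graph of maximum degree at most d, there is a coloring of the bad triangles
(those containing a bad vertex, i.e. one lying in at least d^(2-ε/2) triangles)
with ⌈d^(ε/2)/3⌉ colors such that for every color c, every bad vertex touches at
most 6·d^(2-ε/2) bad triangles of color c. -/
theorem stmt11 {V : Type*} [Fintype V] [DecidableEq V]
    (G : SimpleGraph V) [DecidableRel G.Adj]
    (d : ℕ) (ε : ℝ) (hd : 2 ≤ d) (hε0 : 0 ≤ ε) (hε : ε < 1/2)
    (hdeg : ∀ v, G.degree v ≤ d)
    (T : Finset (Finset V)) (hT3 : ∀ t ∈ T, t.card = 3)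
    (hTadj : ∀ t ∈ T, ∀ u ∈ t, ∀ v ∈ t, u ≠ v → G.Adj u v)
    (bad : V → Prop) [DecidablePred bad]
    (hbad : ∀ v, bad v ↔ (d : ℝ) ^ ((2:ℝ) - ε/2) ≤ ((T.filter (fun t => v ∈ t)).card : ℝ)) :
    ∃ χ : Finset V → Fin ⌈(d : ℝ) ^ (ε/2) / 3⌉₊,
      ∀ c, ∀ v, bad v →
        ((T.filter (fun t => v ∈ t ∧ (∃ u ∈ t, bad u) ∧ χ t = c)).card : ℝ)
          ≤ 6 * (d : ℝ) ^ ((2:ℝ) - ε/2) :=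
  stmt11_general G d ε hd hε hdeg T hT3 hTadj bad
end
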